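/- arXiv:1201.2270 — 13 statements merged into one kernel-verified Lean document; each statement's English description precedes it below -/
import Mathlib

section
/- With the pointwise hypersurface model below, suppose β ≠ 0 and the structure Jacobi operator l is pseudo-parallel with function value L ∈ ℝ. Then δ = 0 (relation (4.5) of the paper, obtained from the pseudo-parallelism condition with X = U, Y = ξ, Z = φU). -/
open scoped RealInnerProductSpace

/-- Relation (4.5): if `β ≠ 0` and the structure Jacobi operator is pseudo-parallel with
function value `L`, then `δ = 0`. -/
theorem pseudo_parallel_delta_eq_zero
    {V : Type*} [NormedAddCommGroup V] [InnerProductSpace ℝ V]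
    (hdim : Module.finrank ℝ V = 3)
    (u w x : V) (hon : Orthonormal ℝ ![u, w, x])
    (φ : V →ₗ[ℝ] V) (hφu : φ u = w) (hφw : φ w = -u) (hφx : φ x = 0)
    (A : V →ₗ[ℝ] V) (hA : ∀ X Y : V, ⟪A X, Y⟫ = ⟪X, A Y⟫)
    (α β γ δ μ c L : ℝ)
    (hAu : A u = γ • u + δ • w + β • x)
    (hAw : A w = δ • u + μ • w)
    (hAx : A x = α • x + β • u)
    (R : V → V → V → V)
    (hR : ∀ X Y Z : V, R X Y Z =
      (c / 4) • (⟪Y, Z⟫ • X - ⟪X, Z⟫ • Y + ⟪φ Y, Z⟫ • φ X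
        - ⟪φ X, Z⟫ • φ Y - (2 * ⟪φ X, Y⟫) • φ Z)
      + ⟪A Y, Z⟫ • A X - ⟪A X, Z⟫ • A Y)
    (l : V → V) (hl : ∀ X : V, l X = R X x x)
    (hpp : ∀ X Y Z : V,
      R X Y (l Z) - l (R X Y Z)
        = L • ((⟪Y, l Z⟫ • X - ⟪l Z, X⟫ • Y)
            - l (⟪Y, Z⟫ • X - ⟪Z, X⟫ • Y)))
    (hβ : β ≠ 0) :
    δ = 0 := by
  rw [orthonormal_iff_ite] at hon
  have huu : ⟪u, u⟫ = 1 := by simpa using hon 0 0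
  have hww : ⟪w, w⟫ = 1 := by simpa using hon 1 1
  have hxx : ⟪x, x⟫ = 1 := by simpa using hon 2 2
  have huw : ⟪u, w⟫ = 0 := by simpa using hon 0 1
  have hux : ⟪u, x⟫ = 0 := by simpa using hon 0 2
  have hwx : ⟪w, x⟫ = 0 := by simpa using hon 1 2
  have hwu : ⟪w, u⟫ = 0 := by rw [real_inner_comm]; exact huw
  have hxu : ⟪x, u⟫ = 0 := by rw [real_inner_comm]; exact hux
  have hxw : ⟪x, w⟫ = 0 := by rw [real_inner_comm]; exact hwx
  have lu : l u = (c/4 + α*γ - β^2) • u + (α*δ) • w := by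
    rw [hl, hR, hφu, hφx, hAu, hAx]
    simp only [inner_add_left, inner_add_right, inner_sub_left, inner_sub_right,
      real_inner_smul_left, real_inner_smul_right, inner_zero_left, inner_zero_right,
      huu, hww, hxx, huw, hwu, hux, hxu, hwx, hxw, smul_zero, map_add, map_smul]
    module
  have lw : l w = (α*δ) • u + (c/4 + α*μ) • w := by
    rw [hl, hR, hφw, hφx, hAw, hAx]
    simp only [inner_add_left, inner_add_right, inner_sub_left, inner_sub_right,
      real_inner_smul_left, real_inner_smul_right, inner_zero_left, inner_zero_right,
      inner_neg_left, inner_neg_right,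
      huu, hww, hxx, huw, hwu, hux, hxu, hwx, hxw, smul_zero, map_add, map_smul]
    module
  have lx : l x = 0 := by
    rw [hl, hR, hφx, hAx]
    simp only [inner_add_left, inner_add_right, inner_sub_left, inner_sub_right,
      real_inner_smul_left, real_inner_smul_right, inner_zero_left, inner_zero_right,
      huu, hww, hxx, huw, hwu, hux, hxu, hwx, hxw, smul_zero, map_add, map_smul]
    module
  have l0 : l 0 = 0 := by
    rw [hl, hR]
    simp
  have Ruxw : R u x w = (-(δ*β)) • u + (-(δ*α)) • x := by
    rw [hR, hφu, hφx]
    simp only [inner_add_left, inner_add_right, inner_sub_left, inner_sub_right,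
      real_inner_smul_left, real_inner_smul_right, inner_zero_left, inner_zero_right,
      inner_neg_left, inner_neg_right, hA, hAu, hAw, hAx,
      huu, hww, hxx, huw, hwu, hux, hxu, hwx, hxw, smul_zero, map_add, map_smul]
    module
  have lcomb : l ((-(δ*β)) • u + (-(δ*α)) • x) = (-(δ*β)) • l u := by
    rw [hl, hR]
    simp only [map_add, map_smul, hφu, hφx, inner_add_left, inner_sub_left,
      real_inner_smul_left, real_inner_smul_right, inner_add_right, inner_sub_right,
      inner_zero_left, inner_zero_right, hA, hAu, hAw, hAx,
      huu, hww, hxx, huw, hwu, hux, hxu, hwx, hxw, smul_zero]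
    rw [lu]
    module
  have Rlw : R u x ((α*δ) • u + (c/4 + α*μ) • w) =
      (-((c/4 + α*μ)*δ*β)) • u + (α*δ*β*δ) • w
        + (α*δ*(β^2 - γ*α - c/4) - (c/4 + α*μ)*δ*α) • x := by
    rw [hR, hφu, hφx]
    simp only [map_add, map_smul, inner_add_left, inner_sub_left,
      real_inner_smul_left, real_inner_smul_right, inner_add_right, inner_sub_right,
      inner_zero_left, inner_zero_right, hA, hAu, hAw, hAx, hφu, hφw, hφx,
      inner_neg_left, inner_neg_right,
      huu, hww, hxx, huw, hwu, hux, hxu, hwx, hxw, smul_zero]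
    module
  have h := hpp u x w
  rw [lw] at h
  rw [Ruxw, lcomb, Rlw, lu] at h
  rw [show (⟪x, w⟫ : ℝ) • u - (⟪w, u⟫ : ℝ) • x = 0 by rw [hxw, hwu]; module, l0] at h
  have hcw := congrArg (fun v : V => (⟪v, w⟫ : ℝ)) h
  have hcu := congrArg (fun v : V => (⟪v, u⟫ : ℝ)) h
  simp only [inner_add_left, inner_sub_left, real_inner_smul_left,
    inner_add_right, inner_sub_right, real_inner_smul_right,
    inner_zero_left, inner_zero_right, inner_neg_left,
    huu, hww, hxx, huw, hwu, hux, hxu, hwx, hxw] at hcw hcu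
  ring_nf at hcw hcu
  have h2 : δ^2 * β^3 = 0 := by linear_combination ((γ-μ)/2) * hcw - δ * hcu
  have hb : β^3 ≠ 0 := pow_ne_zero 3 hβ
  exact sq_eq_zero_iff.mp ((mul_eq_zero.mp h2).resolve_right hb)
end

section
/- With the pointwise hypersurface model below, suppose β ≠ 0, δ = 0, and the structure Jacobi operator l is pseudo-parallel with function value L ∈ ℝ. Then μ(αμ + c/4) = 0 (relation (4.6) of the paper, obtained from the pseudo-parallelism condition with X = U, Y = φU, Z = ξ). -/
/-!
Take `X = U`, `Y = φU`, `Z = ξ` in the pseudo-parallelism condition. Since `φξ = 0`, the structure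
Jacobi operator kills `ξ`, so the right-hand side vanishes and the condition reduces to
`l(R(U, φU)ξ) = 0`. The Gauss equation gives `R(U, φU)ξ = -βμ φU` and `l(φU) = (αμ + c/4) φU`,
hence `βμ(αμ + c/4) = 0`, and `β ≠ 0` finishes the argument.
-/

open scoped RealInnerProductSpace

section

variable {V : Type*} [NormedAddCommGroup V] [InnerProductSpace ℝ V]

noncomputable def gaussCurvature (c : ℝ) (φ A : V →ₗ[ℝ] V) (X Y Z : V) : V :=
  (c / 4) • (⟪Y, Z⟫ • X - ⟪X, Z⟫ • Y + ⟪φ Y, Z⟫ • φ X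
      - ⟪φ X, Z⟫ • φ Y - (2 * ⟪φ X, Y⟫) • φ Z)
    + ⟪A Y, Z⟫ • A X - ⟪A X, Z⟫ • A Y

namespace gaussCurvature

variable (c : ℝ) (φ A : V →ₗ[ℝ] V)

theorem apply_zero_left (Y Z : V) : gaussCurvature c φ A 0 Y Z = 0 := by
  simp [gaussCurvature]

theorem apply_zero_right (X Y : V) : gaussCurvature c φ A X Y 0 = 0 := by
  simp [gaussCurvature]

theorem smul_left (t : ℝ) (X Y Z : V) :
    gaussCurvature c φ A (t • X) Y Z = t • gaussCurvature c φ A X Y Z := by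
  simp only [gaussCurvature, map_smul, real_inner_smul_left]
  module

theorem apply_self_of_map_eq_zero {X : V} (hX : φ X = 0) (Z : V) :
    gaussCurvature c φ A X X Z = 0 := by
  simp [gaussCurvature, hX]

section Frame

variable {u w x : V} (hon : Orthonormal ℝ ![u, w, x]) {φ A} {α β μ : ℝ}
include hon

theorem apply_u_w_x {γ : ℝ} (hφu : φ u = w) (hφw : φ w = -u) (hφx : φ x = 0)
    (hAu : A u = γ • u + β • x) (hAw : A w = μ • w) :
    gaussCurvature c φ A u w x = -(β * μ) • w := by
  have hww : ⟪w, w⟫ = 1 := by simpa using orthonormal_iff_ite.mp hon 1 1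
  have hux : ⟪u, x⟫ = 0 := by simpa using orthonormal_iff_ite.mp hon 0 2
  have hwx : ⟪w, x⟫ = 0 := by simpa using orthonormal_iff_ite.mp hon 1 2
  have hxx : ⟪x, x⟫ = 1 := by simpa using orthonormal_iff_ite.mp hon 2 2
  simp only [gaussCurvature, hφu, hφw, hφx, hAu, hAw, inner_add_left, inner_neg_left,
    real_inner_smul_left, hww, hux, hwx, hxx]
  module

theorem apply_w_x_x (hφx : φ x = 0) (hAw : A w = μ • w) (hAx : A x = α • x + β • u) :
    gaussCurvature c φ A w x x = (c / 4 + α * μ) • w := by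
  have hux : ⟪u, x⟫ = 0 := by simpa using orthonormal_iff_ite.mp hon 0 2
  have hwx : ⟪w, x⟫ = 0 := by simpa using orthonormal_iff_ite.mp hon 1 2
  have hxx : ⟪x, x⟫ = 1 := by simpa using orthonormal_iff_ite.mp hon 2 2
  simp only [gaussCurvature, hφx, hAw, hAx, inner_zero_left, inner_add_left,
    real_inner_smul_left, hux, hwx, hxx]
  module

end Frame

end gaussCurvature

end

theorem pseudo_parallel_mu_relation_general
    {V : Type*} [NormedAddCommGroup V] [InnerProductSpace ℝ V]
    (u w x : V) (hon : Orthonormal ℝ ![u, w, x])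
    (φ : V →ₗ[ℝ] V) (hφu : φ u = w) (hφw : φ w = -u) (hφx : φ x = 0)
    (A : V →ₗ[ℝ] V)
    (α β γ δ μ c L : ℝ)
    (hAu : A u = γ • u + δ • w + β • x)
    (hAw : A w = δ • u + μ • w)
    (hAx : A x = α • x + β • u)
    (R : V → V → V → V)
    (hR : ∀ X Y Z : V, R X Y Z =
      (c / 4) • (⟪Y, Z⟫ • X - ⟪X, Z⟫ • Y + ⟪φ Y, Z⟫ • φ X
        - ⟪φ X, Z⟫ • φ Y - (2 * ⟪φ X, Y⟫) • φ Z)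
      + ⟪A Y, Z⟫ • A X - ⟪A X, Z⟫ • A Y)
    (l : V → V) (hl : ∀ X : V, l X = R X x x)
    (hpp : ∀ X Y Z : V,
      R X Y (l Z) - l (R X Y Z)
        = L • ((⟪Y, l Z⟫ • X - ⟪l Z, X⟫ • Y)
            - l (⟪Y, Z⟫ • X - ⟪Z, X⟫ • Y)))
    (hβ : β ≠ 0)
    (hδ : δ = 0) :
    μ * (α * μ + c / 4) = 0 := by
  subst hδ
  simp only [zero_smul, add_zero, zero_add] at hAu hAw
  obtain rfl : R = gaussCurvature c φ A := funext₃ hR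
  obtain rfl : l = fun X ↦ gaussCurvature c φ A X x x := funext hl
  have hlx : gaussCurvature c φ A x x x = 0 := gaussCurvature.apply_self_of_map_eq_zero c φ A hφx x
  have hwx : ⟪w, x⟫ = 0 := by simpa using orthonormal_iff_ite.mp hon 1 2
  have hxu : ⟪x, u⟫ = 0 := by simpa using orthonormal_iff_ite.mp hon 2 0
  have key : gaussCurvature c φ A (gaussCurvature c φ A u w x) x x = 0 := by
    simpa [hlx, hwx, hxu, gaussCurvature.apply_zero_left, gaussCurvature.apply_zero_right]
      using hpp u w x
  rw [gaussCurvature.apply_u_w_x c hon hφu hφw hφx hAu hAw, gaussCurvature.smul_left,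
    gaussCurvature.apply_w_x_x c hon hφx hAw hAx, smul_smul,
    smul_eq_zero_iff_left (by simpa using hon.ne_zero 1)] at key
  have : β * (μ * (α * μ + c / 4)) = 0 := by linear_combination -key
  exact (mul_eq_zero.mp this).resolve_left hβ

/-- Relation (4.6): if `β ≠ 0`, `δ = 0` and the structure Jacobi operator is pseudo-parallel
with function value `L`, then `μ(αμ + c/4) = 0`. -/
theorem pseudo_parallel_mu_relation
    {V : Type*} [NormedAddCommGroup V] [InnerProductSpace ℝ V]
    (hdim : Module.finrank ℝ V = 3)
    (u w x : V) (hon : Orthonormal ℝ ![u, w, x])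
    (φ : V →ₗ[ℝ] V) (hφu : φ u = w) (hφw : φ w = -u) (hφx : φ x = 0)
    (A : V →ₗ[ℝ] V) (hA : ∀ X Y : V, ⟪A X, Y⟫ = ⟪X, A Y⟫)
    (α β γ δ μ c L : ℝ)
    (hAu : A u = γ • u + δ • w + β • x)
    (hAw : A w = δ • u + μ • w)
    (hAx : A x = α • x + β • u)
    (R : V → V → V → V)
    (hR : ∀ X Y Z : V, R X Y Z =
      (c / 4) • (⟪Y, Z⟫ • X - ⟪X, Z⟫ • Y + ⟪φ Y, Z⟫ • φ X
        - ⟪φ X, Z⟫ • φ Y - (2 * ⟪φ X, Y⟫) • φ Z)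
      + ⟪A Y, Z⟫ • A X - ⟪A X, Z⟫ • A Y)
    (l : V → V) (hl : ∀ X : V, l X = R X x x)
    (hpp : ∀ X Y Z : V,
      R X Y (l Z) - l (R X Y Z)
        = L • ((⟪Y, l Z⟫ • X - ⟪l Z, X⟫ • Y)
            - l (⟪Y, Z⟫ • X - ⟪Z, X⟫ • Y)))
    (hβ : β ≠ 0)
    (hδ : δ = 0) :
    μ * (α * μ + c / 4) = 0 :=
  pseudo_parallel_mu_relation_general u w x hon φ hφu hφw hφx A α β γ δ μ c L hAu hAw hAx R hR l hl
    hpp hβ hδ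
end

section
/- With the pointwise hypersurface model below, suppose α = 0, β ≠ 0, and the structure Jacobi operator l is pseudo-parallel with function value L ∈ ℝ. Then c = 0. (This is the pointwise content of Lemma 4.1: there is no point of a real hypersurface in M₂(c), c ≠ 0, with Aξ = βU, β ≠ 0, at which l is pseudo-parallel.) -/
open scoped RealInnerProductSpace

set_option maxHeartbeats 2000000 in
/-- Pointwise content of Lemma 4.1: if `α = 0`, `β ≠ 0` and the structure Jacobi operator is
pseudo-parallel with function value `L`, then `c = 0`. -/
theorem pseudo_parallel_alpha_zero_forces_c_zero
    {V : Type*} [NormedAddCommGroup V] [InnerProductSpace ℝ V]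
    (hdim : Module.finrank ℝ V = 3)
    (u w x : V) (hon : Orthonormal ℝ ![u, w, x])
    (φ : V →ₗ[ℝ] V) (hφu : φ u = w) (hφw : φ w = -u) (hφx : φ x = 0)
    (A : V →ₗ[ℝ] V) (hA : ∀ X Y : V, ⟪A X, Y⟫ = ⟪X, A Y⟫)
    (α β γ δ μ c L : ℝ)
    (hAu : A u = γ • u + δ • w + β • x)
    (hAw : A w = δ • u + μ • w)
    (hAx : A x = α • x + β • u)
    (R : V → V → V → V)
    (hR : ∀ X Y Z : V, R X Y Z =
      (c / 4) • (⟪Y, Z⟫ • X - ⟪X, Z⟫ • Y + ⟪φ Y, Z⟫ • φ X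
        - ⟪φ X, Z⟫ • φ Y - (2 * ⟪φ X, Y⟫) • φ Z)
      + ⟪A Y, Z⟫ • A X - ⟪A X, Z⟫ • A Y)
    (l : V → V) (hl : ∀ X : V, l X = R X x x)
    (hpp : ∀ X Y Z : V,
      R X Y (l Z) - l (R X Y Z)
        = L • ((⟪Y, l Z⟫ • X - ⟪l Z, X⟫ • Y)
            - l (⟪Y, Z⟫ • X - ⟪Z, X⟫ • Y)))
    (hα : α = 0)
    (hβ : β ≠ 0) :
    c = 0 := by
  subst hα
  have h := orthonormal_iff_ite.mp hon
  have huu : ⟪u,u⟫ = 1 := by simpa using h 0 0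
  have huw : ⟪u,w⟫ = 0 := by simpa using h 0 1
  have hux : ⟪u,x⟫ = 0 := by simpa using h 0 2
  have hwu : ⟪w,u⟫ = 0 := by simpa using h 1 0
  have hww : ⟪w,w⟫ = 1 := by simpa using h 1 1
  have hwx : ⟪w,x⟫ = 0 := by simpa using h 1 2
  have hxu : ⟪x,u⟫ = 0 := by simpa using h 2 0
  have hxw : ⟪x,w⟫ = 0 := by simpa using h 2 1
  have hxx : ⟪x,x⟫ = 1 := by simpa using h 2 2
  have E1 := congrArg (fun v => ⟪v, w⟫) (hpp u x u)
  simp only [hl, hR, map_add, map_sub, map_neg, map_smul, hφu, hφw, hφx, hAu, hAw, hAx,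
    inner_add_left, inner_add_right, inner_sub_left, inner_sub_right, inner_neg_left,
    inner_neg_right, inner_smul_left, inner_smul_right, inner_zero_left, inner_zero_right,
    smul_add, smul_sub, smul_neg, smul_smul, smul_zero, map_zero,
    huu, huw, hux, hwu, hww, hwx, hxu, hxw, hxx,
    RCLike.inner_apply, conj_trivial] at E1
  ring_nf at E1
  have E2 := congrArg (fun v => ⟪v, u⟫) (hpp w x w)
  have E3 := congrArg (fun v => ⟪v, x⟫) (hpp w x w)
  have E4 := congrArg (fun v => ⟪v, w⟫) (hpp u w u)
  simp only [hl, hR, map_add, map_sub, map_neg, map_smul, hφu, hφw, hφx, hAu, hAw, hAx,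
    inner_add_left, inner_add_right, inner_sub_left, inner_sub_right, inner_neg_left,
    inner_neg_right, inner_smul_left, inner_smul_right, inner_zero_left, inner_zero_right,
    smul_add, smul_sub, smul_neg, smul_smul, smul_zero, map_zero,
    huu, huw, hux, hwu, hww, hwx, hxu, hxw, hxx,
    RCLike.inner_apply, conj_trivial] at E2
  simp only [hl, hR, map_add, map_sub, map_neg, map_smul, hφu, hφw, hφx, hAu, hAw, hAx,
    inner_add_left, inner_add_right, inner_sub_left, inner_sub_right, inner_neg_left,
    inner_neg_right, inner_smul_left, inner_smul_right, inner_zero_left, inner_zero_right,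
    smul_add, smul_sub, smul_neg, smul_smul, smul_zero, map_zero,
    huu, huw, hux, hwu, hww, hwx, hxu, hxw, hxx,
    RCLike.inner_apply, conj_trivial] at E3
  simp only [hl, hR, map_add, map_sub, map_neg, map_smul, hφu, hφw, hφx, hAu, hAw, hAx,
    inner_add_left, inner_add_right, inner_sub_left, inner_sub_right, inner_neg_left,
    inner_neg_right, inner_smul_left, inner_smul_right, inner_zero_left, inner_zero_right,
    smul_add, smul_sub, smul_neg, smul_smul, smul_zero, map_zero,
    huu, huw, hux, hwu, hww, hwx, hxu, hxw, hxx,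
    RCLike.inner_apply, conj_trivial] at E4
  ring_nf at E2 E3 E4
  have hδ : δ = 0 := by
    have hb3 : β ^ 3 ≠ 0 := pow_ne_zero 3 hβ
    have h0 : β ^ 3 * δ = 0 := by linarith
    exact (mul_eq_zero.mp h0).resolve_left hb3
  have hμ : μ = 0 := by
    have hb3 : β ^ 3 ≠ 0 := pow_ne_zero 3 hβ
    have h0 : β ^ 3 * μ = 0 := by linarith
    exact (mul_eq_zero.mp h0).resolve_left hb3
  subst hδ hμ
  have hb2 : β ^ 2 ≠ 0 := pow_ne_zero 2 hβ
  have hL : L = c := by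
    have h0 : β ^ 2 * L = β ^ 2 * c := by nlinarith [E4]
    exact mul_left_cancel₀ hb2 h0
  rw [hL] at E3
  have hc2 : c ^ 2 = 0 := by nlinarith [E3]
  exact pow_eq_zero_iff (two_ne_zero) |>.mp hc2
end

section
/- With the pointwise hypersurface model below, suppose δ = 0, μ = 0, and the structure Jacobi operator l is pseudo-parallel with function value L ∈ ℝ. Then (β² − αγ)(c − L) = 0 (relation (4.7) of the paper, obtained from the pseudo-parallelism condition with X = U, Y = φU, Z = U). -/
open scoped RealInnerProductSpace

/-- Relation (4.7): if `δ = 0`, `μ = 0` and the structure Jacobi operator is pseudo-parallel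
with function value `L`, then `(β² − αγ)(c − L) = 0`. -/
theorem pseudo_parallel_relation_4_7
    {V : Type*} [NormedAddCommGroup V] [InnerProductSpace ℝ V]
    (hdim : Module.finrank ℝ V = 3)
    (u w x : V) (hon : Orthonormal ℝ ![u, w, x])
    (φ : V →ₗ[ℝ] V) (hφu : φ u = w) (hφw : φ w = -u) (hφx : φ x = 0)
    (A : V →ₗ[ℝ] V) (hA : ∀ X Y : V, ⟪A X, Y⟫ = ⟪X, A Y⟫)
    (α β γ δ μ c L : ℝ)
    (hAu : A u = γ • u + δ • w + β • x)
    (hAw : A w = δ • u + μ • w)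
    (hAx : A x = α • x + β • u)
    (R : V → V → V → V)
    (hR : ∀ X Y Z : V, R X Y Z =
      (c / 4) • (⟪Y, Z⟫ • X - ⟪X, Z⟫ • Y + ⟪φ Y, Z⟫ • φ X
        - ⟪φ X, Z⟫ • φ Y - (2 * ⟪φ X, Y⟫) • φ Z)
      + ⟪A Y, Z⟫ • A X - ⟪A X, Z⟫ • A Y)
    (l : V → V) (hl : ∀ X : V, l X = R X x x)
    (hpp : ∀ X Y Z : V,
      R X Y (l Z) - l (R X Y Z)
        = L • ((⟪Y, l Z⟫ • X - ⟪l Z, X⟫ • Y)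
            - l (⟪Y, Z⟫ • X - ⟪Z, X⟫ • Y)))
    (hδ : δ = 0)
    (hμ : μ = 0) :
    (β ^ 2 - α * γ) * (c - L) = 0 := by
  subst hδ hμ
  rw [orthonormal_iff_ite] at hon
  have iuu : ⟪u, u⟫ = 1 := by simpa using hon 0 0
  have iww : ⟪w, w⟫ = 1 := by simpa using hon 1 1
  have ixx : ⟪x, x⟫ = 1 := by simpa using hon 2 2
  have iuw : ⟪u, w⟫ = 0 := by simpa using hon 0 1
  have iwu : ⟪w, u⟫ = 0 := by simpa using hon 1 0
  have iux : ⟪u, x⟫ = 0 := by simpa using hon 0 2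
  have ixu : ⟪x, u⟫ = 0 := by simpa using hon 2 0
  have iwx : ⟪w, x⟫ = 0 := by simpa using hon 1 2
  have ixw : ⟪x, w⟫ = 0 := by simpa using hon 2 1
  have key := hpp u w u
  have key2 := congrArg (fun v : V => ⟪v, w⟫) key
  simp only [hl, hR] at key2
  simp only [hφu, hφw, hφx, hAu, hAw, hAx, map_add, map_sub, map_smul, map_neg, map_zero,
    inner_add_left, inner_add_right, inner_sub_left, inner_sub_right,
    real_inner_smul_left, real_inner_smul_right, inner_neg_left, inner_neg_right,
    inner_zero_left, inner_zero_right, smul_add, smul_sub, smul_smul, smul_neg, smul_zero,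
    zero_smul, iuu, iww, ixx, iuw, iwu, iux, ixu, iwx, ixw] at key2
  ring_nf at key2 ⊢
  nlinarith [key2, sq_nonneg (c - L), sq_nonneg (β^2 - α*γ)]
end

section
/- With the pointwise hypersurface model below, suppose δ = 0, μ = 0, L = c, and the structure Jacobi operator l is pseudo-parallel with function value L. Then c = 0. (This is the final step of Lemma 4.2: on the set where L = c, the pseudo-parallelism condition with X = ξ and Y = Z = φU forces c = 0, a contradiction.) -/
open scoped RealInnerProductSpace

/-!
Take `X = ξ` and `Y = Z = v` with `v` a unit vector orthogonal to `ξ` in the kernel of `A`. Since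
`φ ξ = 0`, the Jacobi operator acts as `c/4` on `v` and kills `ξ`, while `R(ξ, v) v = (c/4) ξ`.
The pseudo-parallelism condition then reads `(c/4)² ξ = L (c/4) ξ`, i.e. `c (c - 4L) = 0`, and
`L = c` leaves only `c = 0`.
-/

section

variable {V : Type*} [NormedAddCommGroup V] [InnerProductSpace ℝ V]

def IsPseudoParallel (R : V → V → V → V) (l : V → V) (L : ℝ) : Prop :=
  ∀ X Y Z : V, R X Y (l Z) - l (R X Y Z)
    = L • ((⟪Y, l Z⟫ • X - ⟪l Z, X⟫ • Y) - l (⟪Y, Z⟫ • X - ⟪Z, X⟫ • Y))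

namespace gaussCurvature

variable {c : ℝ} {φ A : V →ₗ[ℝ] V} {ξ v : V}

theorem apply_smul_right (X Y Z : V) (t : ℝ) :
    gaussCurvature c φ A X Y (t • Z) = t • gaussCurvature c φ A X Y Z := by
  simp only [gaussCurvature, map_smul, real_inner_smul_right]
  module

theorem smul_self_left (hξ : φ ξ = 0) (t : ℝ) (Z : V) :
    gaussCurvature c φ A (t • ξ) ξ Z = 0 := by
  simp only [gaussCurvature, map_smul, hξ, real_inner_smul_left, smul_zero, inner_zero_left]
  module

theorem apply_self_self (hξ : φ ξ = 0) (hv : A v = 0) :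
    gaussCurvature c φ A v ξ ξ = (c / 4) • (⟪ξ, ξ⟫ • v - ⟪v, ξ⟫ • ξ) := by
  simp only [gaussCurvature, hξ, hv, inner_zero_left, smul_zero]
  module

theorem self_apply_apply (hξ : φ ξ = 0) (hv : A v = 0) :
    gaussCurvature c φ A ξ v v = (c / 4) • (⟪v, v⟫ • ξ - ⟪ξ, v⟫ • v) := by
  simp only [gaussCurvature, hξ, hv, inner_zero_left, smul_zero]
  module

end gaussCurvature

open gaussCurvature in
theorem mul_sub_eq_zero_of_isPseudoParallel {c L : ℝ} {φ A : V →ₗ[ℝ] V} {ξ v : V}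
    (hξ : φ ξ = 0) (hv : A v = 0) (hξξ : ⟪ξ, ξ⟫ = 1) (hvv : ⟪v, v⟫ = 1) (hvξ : ⟪v, ξ⟫ = 0)
    (hpp : IsPseudoParallel (gaussCurvature c φ A) (fun X ↦ gaussCurvature c φ A X ξ ξ) L) :
    c * (c - 4 * L) = 0 := by
  have hξv : ⟪ξ, v⟫ = 0 := by rw [real_inner_comm, hvξ]
  have hlv : gaussCurvature c φ A v ξ ξ = (c / 4) • v := by
    rw [apply_self_self hξ hv, hξξ, hvξ]
    module
  have hRξvv : gaussCurvature c φ A ξ v v = (c / 4) • ξ := by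
    rw [self_apply_apply hξ hv, hvv, hξv]
    module
  have hlξ : gaussCurvature c φ A ξ ξ ξ = 0 := by
    simpa using smul_self_left (c := c) (A := A) hξ 1 ξ
  have h := hpp ξ v v
  simp only [hlv, hRξvv, apply_smul_right, smul_self_left hξ, hvv, hvξ, real_inner_smul_left,
    real_inner_smul_right, one_smul, zero_smul, sub_zero, hlξ, mul_zero, mul_one] at h
  have hscalar := congrArg (⟪·, ξ⟫) h
  simp only [real_inner_smul_left, hξξ] at hscalar
  linear_combination 16 * hscalar

end

theorem pseudo_parallel_L_eq_c_forces_c_zero_general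
    {V : Type*} [NormedAddCommGroup V] [InnerProductSpace ℝ V]
    (u w x : V) (hon : Orthonormal ℝ ![u, w, x])
    (φ : V →ₗ[ℝ] V) (hφx : φ x = 0)
    (A : V →ₗ[ℝ] V)
    (δ μ c L : ℝ)
    (hAw : A w = δ • u + μ • w)
    (R : V → V → V → V)
    (hR : ∀ X Y Z : V, R X Y Z =
      (c / 4) • (⟪Y, Z⟫ • X - ⟪X, Z⟫ • Y + ⟪φ Y, Z⟫ • φ X
        - ⟪φ X, Z⟫ • φ Y - (2 * ⟪φ X, Y⟫) • φ Z)
      + ⟪A Y, Z⟫ • A X - ⟪A X, Z⟫ • A Y)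
    (l : V → V) (hl : ∀ X : V, l X = R X x x)
    (hpp : ∀ X Y Z : V,
      R X Y (l Z) - l (R X Y Z)
        = L • ((⟪Y, l Z⟫ • X - ⟪l Z, X⟫ • Y)
            - l (⟪Y, Z⟫ • X - ⟪Z, X⟫ • Y)))
    (hδ : δ = 0)
    (hμ : μ = 0)
    (hLc : L = c) :
    c = 0 := by
  subst hδ hμ hLc
  obtain rfl : R = gaussCurvature L φ A := funext fun X ↦ funext fun Y ↦ funext (hR X Y)
  obtain rfl : l = fun X ↦ gaussCurvature L φ A X x x := funext hl
  rw [orthonormal_iff_ite] at hon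
  have hxx : ⟪x, x⟫ = 1 := by simpa using hon 2 2
  have hww : ⟪w, w⟫ = 1 := by simpa using hon 1 1
  have hwx : ⟪w, x⟫ = 0 := by simpa using hon 1 2
  have hkey := mul_sub_eq_zero_of_isPseudoParallel hφx (by simpa using hAw) hxx hww hwx hpp
  have hsq : L ^ 2 = 0 := by linear_combination (-1 / 3 : ℝ) * hkey
  exact pow_eq_zero_iff two_ne_zero |>.mp hsq

/-- Final step of Lemma 4.2: if `δ = 0`, `μ = 0`, `L = c` and the structure Jacobi operator is
pseudo-parallel with function value `L`, then `c = 0`. -/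
theorem pseudo_parallel_L_eq_c_forces_c_zero
    {V : Type*} [NormedAddCommGroup V] [InnerProductSpace ℝ V]
    (hdim : Module.finrank ℝ V = 3)
    (u w x : V) (hon : Orthonormal ℝ ![u, w, x])
    (φ : V →ₗ[ℝ] V) (hφu : φ u = w) (hφw : φ w = -u) (hφx : φ x = 0)
    (A : V →ₗ[ℝ] V) (hA : ∀ X Y : V, ⟪A X, Y⟫ = ⟪X, A Y⟫)
    (α β γ δ μ c L : ℝ)
    (hAu : A u = γ • u + δ • w + β • x)
    (hAw : A w = δ • u + μ • w)
    (hAx : A x = α • x + β • u)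
    (R : V → V → V → V)
    (hR : ∀ X Y Z : V, R X Y Z =
      (c / 4) • (⟪Y, Z⟫ • X - ⟪X, Z⟫ • Y + ⟪φ Y, Z⟫ • φ X
        - ⟪φ X, Z⟫ • φ Y - (2 * ⟪φ X, Y⟫) • φ Z)
      + ⟪A Y, Z⟫ • A X - ⟪A X, Z⟫ • A Y)
    (l : V → V) (hl : ∀ X : V, l X = R X x x)
    (hpp : ∀ X Y Z : V,
      R X Y (l Z) - l (R X Y Z)
        = L • ((⟪Y, l Z⟫ • X - ⟪l Z, X⟫ • Y)
            - l (⟪Y, Z⟫ • X - ⟪Z, X⟫ • Y)))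
    (hδ : δ = 0)
    (hμ : μ = 0)
    (hLc : L = c) :
    c = 0 :=
  pseudo_parallel_L_eq_c_forces_c_zero_general u w x hon φ hφx A δ μ c L hAw R hR l hl hpp hδ hμ hLc
end

section
/- Let α, β, c, κ₁, κ₃, Dα, Dβ be real numbers with α ≠ 0 and β ≠ 0, satisfying: β²κ₃/α = βκ₁ + c/4; Dα = β(α + κ₃); Dβ = β² + βκ₁ + c/2; and (2βα·Dβ − β²·Dα)/α² = (β²/α)(κ₁ + β). Then c = 0. (This is the contradiction derived in the proof of Lemma 4.2 on Ω₁₁ from relations (4.8)–(4.11), where Dα and Dβ denote the derivatives of α and β along φU.) -/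
/-! The Codazzi relations (4.8)–(4.10) make the quotient-rule expansion of `(φU)(β²/α)` exceed
the value `(β²/α)(κ₁ + β)` required by (4.11) by exactly `3cβ/(4α)`; as `α, β ≠ 0`, `c = 0`. -/

lemma quotient_rule_expansion_eq_add (α β c κ₁ κ₃ : ℝ) (hα : α ≠ 0)
    (h48 : β ^ 2 * κ₃ / α = β * κ₁ + c / 4) :
    (2 * β * α * (β ^ 2 + β * κ₁ + c / 2) - β ^ 2 * (β * (α + κ₃))) / α ^ 2
      = β ^ 2 / α * (κ₁ + β) + 3 * c * β / (4 * α) := by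
  have hκ₃ : β ^ 2 * κ₃ = α * (β * κ₁ + c / 4) := by
    rw [← h48, mul_div_cancel₀ _ hα]
  field_simp
  linear_combination (-4 * β) * hκ₃

/-- The contradiction on Ω₁₁ in the proof of Lemma 4.2: relations (4.8)–(4.11), with `Dα`, `Dβ`
denoting the derivatives of `α`, `β` along `φU`, force `c = 0`. -/
theorem lemma_4_2_omega11_contradiction
    (α β c κ₁ κ₃ Dα Dβ : ℝ) (hα : α ≠ 0) (hβ : β ≠ 0)
    (h48 : β ^ 2 * κ₃ / α = β * κ₁ + c / 4)
    (h49 : Dα = β * (α + κ₃))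
    (h410 : Dβ = β ^ 2 + β * κ₁ + c / 2)
    (h411 : (2 * β * α * Dβ - β ^ 2 * Dα) / α ^ 2 = (β ^ 2 / α) * (κ₁ + β)) :
    c = 0 := by
  subst h49 h410
  have hexcess : 3 * c * β / (4 * α) = 0 := by
    linarith [quotient_rule_expansion_eq_add α β c κ₁ κ₃ hα h48]
  simpa [hα, hβ] using hexcess
end

section
/- With the pointwise hypersurface model below, suppose α ≠ 0, β ≠ 0, c ≠ 0, δ = 0, μ = −c/(4α), and the structure Jacobi operator l is pseudo-parallel with function value L ∈ ℝ. Then γ = β²/α − c/(4α), and consequently l(X) = 0 for every X ∈ V. (This is the pointwise content of the proof of Lemma 4.3.) -/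
open scoped RealInnerProductSpace

/-!
Because `φ ξ = 0`, the structure Jacobi operator is `l X = (c/4)(X - η(X) ξ) + α A X - η(A X) A ξ`,
a linear map. On the frame, `l ξ = 0`, `l w = (c/4 + α μ) w = 0` by the choice of `μ`, and
`l u = k u` with `k = c/4 + α γ - β²`. Pseudo-parallelism at `(w, ξ, u)` has vanishing right-hand
side, as `l u` is orthogonal to `w` and `ξ`, while its left-hand side is
`k R(w, ξ) u - l (R(w, ξ) u) = k β μ w`. Since `β μ ≠ 0`, `k = 0`: this is the formula for `γ`,
and `l` vanishes on a basis.
-/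

section

variable {V : Type*} [NormedAddCommGroup V] [InnerProductSpace ℝ V]

noncomputable def structureJacobi (c : ℝ) (A : V →ₗ[ℝ] V) (ξ : V) : V →ₗ[ℝ] V :=
  (c / 4) • (LinearMap.id - (innerₛₗ ℝ ξ).smulRight ξ) + ⟪A ξ, ξ⟫ • A
    - ((innerₛₗ ℝ ξ) ∘ₗ A).smulRight (A ξ)

theorem structureJacobi_apply (c : ℝ) (A : V →ₗ[ℝ] V) (ξ X : V) :
    structureJacobi c A ξ X = (c / 4) • (X - ⟪X, ξ⟫ • ξ) + ⟪A ξ, ξ⟫ • A X - ⟪A X, ξ⟫ • A ξ := by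
  simp [structureJacobi, real_inner_comm ξ]

theorem gaussCurvature_smul_right (c : ℝ) (φ A : V →ₗ[ℝ] V) (X Y Z : V) (k : ℝ) :
    gaussCurvature c φ A X Y (k • Z) = k • gaussCurvature c φ A X Y Z := by
  simp only [gaussCurvature, inner_smul_right, map_smul]
  module

theorem gaussCurvature_eq_structureJacobi {c : ℝ} {φ A : V →ₗ[ℝ] V} {ξ : V} (hφξ : φ ξ = 0)
    (hξ : ⟪ξ, ξ⟫ = 1) (X : V) :
    gaussCurvature c φ A X ξ ξ = structureJacobi c A ξ X := by
  simp only [gaussCurvature, structureJacobi_apply, hφξ, hξ, inner_zero_left]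
  module

theorem structureJacobi_apply_self (c : ℝ) (A : V →ₗ[ℝ] V) {ξ : V} (hξ : ⟪ξ, ξ⟫ = 1) :
    structureJacobi c A ξ ξ = 0 := by
  simp only [structureJacobi_apply, hξ]
  module

variable {u w ξ : V} {A : V →ₗ[ℝ] V} {α β γ μ : ℝ}

theorem structureJacobi_apply_of_apply_eq_add {c : ℝ} (hAu : A u = γ • u + β • ξ)
    (hAξ : A ξ = α • ξ + β • u) (huξ : ⟪u, ξ⟫ = 0) (hξ : ⟪ξ, ξ⟫ = 1) :
    structureJacobi c A ξ u = (c / 4 + α * γ - β ^ 2) • u := by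
  simp only [structureJacobi_apply, hAu, hAξ, inner_add_left, real_inner_smul_left, huξ, hξ]
  module

theorem structureJacobi_apply_of_apply_eq_smul {c : ℝ} (hAw : A w = μ • w)
    (hAξ : A ξ = α • ξ + β • u) (huξ : ⟪u, ξ⟫ = 0) (hwξ : ⟪w, ξ⟫ = 0) (hξ : ⟪ξ, ξ⟫ = 1) :
    structureJacobi c A ξ w = (c / 4 + α * μ) • w := by
  simp only [structureJacobi_apply, hAw, hAξ, inner_add_left, real_inner_smul_left, huξ, hwξ, hξ]
  module

theorem gaussCurvature_apply_eq_smul {c : ℝ} {φ : V →ₗ[ℝ] V} (hφw : φ w = -u) (hφξ : φ ξ = 0)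
    (hAw : A w = μ • w) (hAξ : A ξ = α • ξ + β • u)
    (hu : ⟪u, u⟫ = 1) (huw : ⟪u, w⟫ = 0) (huξ : ⟪u, ξ⟫ = 0) :
    gaussCurvature c φ A w ξ u = (β * μ) • w := by
  simp only [gaussCurvature, hφw, hφξ, hAw, hAξ, inner_zero_left, inner_neg_left,
    inner_add_left, real_inner_smul_left, real_inner_comm u ξ, real_inner_comm u w, hu, huw, huξ]
  module

theorem eigenvalue_eq_zero_of_pseudoParallel {c L k s : ℝ} {φ T : V →ₗ[ℝ] V}
    (hpp : gaussCurvature c φ A w ξ (T u) - T (gaussCurvature c φ A w ξ u)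
      = L • ((⟪ξ, T u⟫ • w - ⟪T u, w⟫ • ξ) - T (⟪ξ, u⟫ • w - ⟪u, w⟫ • ξ)))
    (hTu : T u = k • u) (hTw : T w = 0) (hR : gaussCurvature c φ A w ξ u = s • w)
    (hξu : ⟪ξ, u⟫ = 0) (huw : ⟪u, w⟫ = 0) (hs : s ≠ 0) (hw : w ≠ 0) : k = 0 := by
  rw [hTu, gaussCurvature_smul_right, hR, map_smul, hTw, inner_smul_right, inner_smul_left,
    hξu, huw] at hpp
  simpa [smul_smul, hs, hw] using hpp

end

theorem pseudo_parallel_structure_jacobi_vanishes_general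
    {V : Type*} [NormedAddCommGroup V] [InnerProductSpace ℝ V]
    (hdim : Module.finrank ℝ V = 3)
    (u w x : V) (hon : Orthonormal ℝ ![u, w, x])
    (φ : V →ₗ[ℝ] V) (hφw : φ w = -u) (hφx : φ x = 0)
    (A : V →ₗ[ℝ] V)
    (α β γ δ μ c L : ℝ)
    (hAu : A u = γ • u + δ • w + β • x)
    (hAw : A w = δ • u + μ • w)
    (hAx : A x = α • x + β • u)
    (R : V → V → V → V)
    (hR : ∀ X Y Z : V, R X Y Z =
      (c / 4) • (⟪Y, Z⟫ • X - ⟪X, Z⟫ • Y + ⟪φ Y, Z⟫ • φ X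
        - ⟪φ X, Z⟫ • φ Y - (2 * ⟪φ X, Y⟫) • φ Z)
      + ⟪A Y, Z⟫ • A X - ⟪A X, Z⟫ • A Y)
    (l : V → V) (hl : ∀ X : V, l X = R X x x)
    (hpp : ∀ X Y Z : V,
      R X Y (l Z) - l (R X Y Z)
        = L • ((⟪Y, l Z⟫ • X - ⟪l Z, X⟫ • Y)
            - l (⟪Y, Z⟫ • X - ⟪Z, X⟫ • Y)))
    (hα : α ≠ 0)
    (hβ : β ≠ 0)
    (hc : c ≠ 0)
    (hδ : δ = 0)
    (hμ : μ = -c / (4 * α)) :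
    γ = β ^ 2 / α - c / (4 * α) ∧ ∀ X : V, l X = 0 := by
  subst hδ
  have hio := orthonormal_iff_ite.mp hon
  have huu : ⟪u, u⟫ = 1 := by simpa using hio 0 0
  have huw : ⟪u, w⟫ = 0 := by simpa using hio 0 1
  have hux : ⟪u, x⟫ = 0 := by simpa using hio 0 2
  have hwx : ⟪w, x⟫ = 0 := by simpa using hio 1 2
  have hxu : ⟪x, u⟫ = 0 := by simpa using hio 2 0
  have hxx : ⟪x, x⟫ = 1 := by simpa using hio 2 2
  obtain rfl : R = gaussCurvature c φ A := funext fun X => funext fun Y => funext (hR X Y)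
  obtain rfl : l = structureJacobi c A x :=
    funext fun X => (hl X).trans (gaussCurvature_eq_structureJacobi hφx hxx X)
  have hAu' : A u = γ • u + β • x := by simpa using hAu
  have hAw' : A w = μ • w := by simpa using hAw
  have hαμ : c / 4 + α * μ = 0 := by rw [hμ]; field_simp; ring
  have hμ0 : μ ≠ 0 := by rw [hμ]; exact div_ne_zero (neg_ne_zero.mpr hc) (by positivity)
  have hlw : structureJacobi c A x w = 0 := by
    rw [structureJacobi_apply_of_apply_eq_smul hAw' hAx hux hwx hxx, hαμ, zero_smul]
  have hk : c / 4 + α * γ - β ^ 2 = 0 :=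
    eigenvalue_eq_zero_of_pseudoParallel (hpp w x u)
      (structureJacobi_apply_of_apply_eq_add hAu' hAx hux hxx) hlw
      (gaussCurvature_apply_eq_smul hφw hφx hAw' hAx huu huw hux) hxu huw (mul_ne_zero hβ hμ0)
      (hon.ne_zero 1)
  refine ⟨by field_simp; linear_combination 4 * hk, ?_⟩
  have hspan := hon.linearIndependent.span_eq_top_of_card_eq_finrank (by simp [hdim])
  have hl0 : structureJacobi c A x = 0 := by
    refine LinearMap.ext_on_range hspan fun i => ?_
    fin_cases i
    · simp [structureJacobi_apply_of_apply_eq_add hAu' hAx hux hxx, hk]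
    · simpa using hlw
    · simpa using structureJacobi_apply_self c A hxx
  simp [hl0]

/-- Pointwise content of the proof of Lemma 4.3: with `α ≠ 0`, `β ≠ 0`, `c ≠ 0`, `δ = 0`,
`μ = −c/(4α)` and pseudo-parallel structure Jacobi operator, `γ = β²/α − c/(4α)` and `l` vanishes. -/
theorem pseudo_parallel_structure_jacobi_vanishes
    {V : Type*} [NormedAddCommGroup V] [InnerProductSpace ℝ V]
    (hdim : Module.finrank ℝ V = 3)
    (u w x : V) (hon : Orthonormal ℝ ![u, w, x])
    (φ : V →ₗ[ℝ] V) (hφu : φ u = w) (hφw : φ w = -u) (hφx : φ x = 0)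
    (A : V →ₗ[ℝ] V) (hA : ∀ X Y : V, ⟪A X, Y⟫ = ⟪X, A Y⟫)
    (α β γ δ μ c L : ℝ)
    (hAu : A u = γ • u + δ • w + β • x)
    (hAw : A w = δ • u + μ • w)
    (hAx : A x = α • x + β • u)
    (R : V → V → V → V)
    (hR : ∀ X Y Z : V, R X Y Z =
      (c / 4) • (⟪Y, Z⟫ • X - ⟪X, Z⟫ • Y + ⟪φ Y, Z⟫ • φ X
        - ⟪φ X, Z⟫ • φ Y - (2 * ⟪φ X, Y⟫) • φ Z)
      + ⟪A Y, Z⟫ • A X - ⟪A X, Z⟫ • A Y)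
    (l : V → V) (hl : ∀ X : V, l X = R X x x)
    (hpp : ∀ X Y Z : V,
      R X Y (l Z) - l (R X Y Z)
        = L • ((⟪Y, l Z⟫ • X - ⟪l Z, X⟫ • Y)
            - l (⟪Y, Z⟫ • X - ⟪Z, X⟫ • Y)))
    (hα : α ≠ 0)
    (hβ : β ≠ 0)
    (hc : c ≠ 0)
    (hδ : δ = 0)
    (hμ : μ = -c / (4 * α)) :
    γ = β ^ 2 / α - c / (4 * α) ∧ ∀ X : V, l X = 0 :=
  pseudo_parallel_structure_jacobi_vanishes_general hdim u w x hon φ hφw hφx A α β γ δ μ c L hAu hAw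
    hAx R hR l hl hpp hα hβ hc hδ hμ
end

section
/- Let V be a 3-dimensional real inner product space with orthonormal basis {u, w, x}, let φ : V → V be the linear map with φu = w, φw = −u, φx = 0, set η(X) = ⟨X,x⟩, and let A : V → V be a symmetric linear map with Ax = αx + βu where α ≠ 0. Define R(X,Y)Z = (c/4)(⟨Y,Z⟩X − ⟨X,Z⟩Y + ⟨φY,Z⟩φX − ⟨φX,Z⟩φY − 2⟨φX,Y⟩φZ) + ⟨AY,Z⟩AX − ⟨AX,Z⟩AY for a real number c, and l(X) = R(X,x)x. If l(X) = 0 for all X ∈ V, then α·Au = (β² − c/4)u + αβ·x and α·Aw = −(c/4)w. (This determines the shape operator of a hypersurface with vanishing structure Jacobi operator, as in the proof of Proposition 3.2.) -/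
open scoped RealInnerProductSpace

/-- From the proof of Proposition 3.2: if the structure Jacobi operator vanishes and
`Ax = αx + βu` with `α ≠ 0`, then `α·Au = (β² − c/4)u + αβ·x` and `α·Aw = −(c/4)w`. -/
theorem vanishing_structure_jacobi_shape_operator
    {V : Type*} [NormedAddCommGroup V] [InnerProductSpace ℝ V]
    (hdim : Module.finrank ℝ V = 3)
    (u w x : V) (hon : Orthonormal ℝ ![u, w, x])
    (φ : V →ₗ[ℝ] V) (hφu : φ u = w) (hφw : φ w = -u) (hφx : φ x = 0)
    (A : V →ₗ[ℝ] V) (hA : ∀ X Y : V, ⟪A X, Y⟫ = ⟪X, A Y⟫)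
    (α β c : ℝ) (hα : α ≠ 0)
    (hAx : A x = α • x + β • u)
    (R : V → V → V → V)
    (hR : ∀ X Y Z : V, R X Y Z =
      (c / 4) • (⟪Y, Z⟫ • X - ⟪X, Z⟫ • Y + ⟪φ Y, Z⟫ • φ X
        - ⟪φ X, Z⟫ • φ Y - (2 * ⟪φ X, Y⟫) • φ Z)
      + ⟪A Y, Z⟫ • A X - ⟪A X, Z⟫ • A Y)
    (l : V → V) (hl : ∀ X : V, l X = R X x x)
    (hl0 : ∀ X : V, l X = 0) :
    α • A u = (β ^ 2 - c / 4) • u + (α * β) • x ∧ α • A w = (-(c / 4)) • w := by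
  have h := orthonormal_iff_ite.mp hon
  have huu : ⟪u, u⟫ = 1 := by simpa using h 0 0
  have hux : ⟪u, x⟫ = 0 := by simpa using h 0 2
  have hwx : ⟪w, x⟫ = 0 := by simpa using h 1 2
  have hxx : ⟪x, x⟫ = 1 := by simpa using h 2 2
  have hxu : ⟪x, u⟫ = 0 := by simpa using h 2 0
  have hAxx : ⟪A x, x⟫ = α := by
    rw [hAx, inner_add_left, real_inner_smul_left, real_inner_smul_left, hxx, hux]; ring
  have hAux : ⟪A u, x⟫ = β := by
    rw [hA, hAx, inner_add_right, real_inner_smul_right, real_inner_smul_right, hux, huu]; ring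
  have hAwx : ⟪A w, x⟫ = 0 := by
    rw [hA, hAx, inner_add_right, real_inner_smul_right, real_inner_smul_right, hwx]
    have : ⟪w, u⟫ = 0 := by simpa using h 1 0
    rw [this]; ring
  have hu0 : R u x x = 0 := by rw [← hl]; exact hl0 u
  have hw0 : R w x x = 0 := by rw [← hl]; exact hl0 w
  rw [hR, hφx, hφu, hxx, hux, hwx, hAxx, hAux, hAx] at hu0
  rw [hR, hφx, hφw, hxx, hwx, hAxx, hAwx, hAx] at hw0
  simp only [inner_zero_left, LinearMap.map_zero, inner_neg_left, hux] at hu0 hw0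
  constructor
  · linear_combination (norm := module) hu0
  · linear_combination (norm := module) hw0
end

section
/- Let V be a 3-dimensional real inner product space with orthonormal basis {u, w, x}, let φ : V → V be the linear map with φu = w, φw = −u, φx = 0, set η(X) = ⟨X,x⟩, and let A : V → V be a symmetric linear map with Ax = βu where β ≠ 0. Define R(X,Y)Z = (c/4)(⟨Y,Z⟩X − ⟨X,Z⟩Y + ⟨φY,Z⟩φX − ⟨φX,Z⟩φY − 2⟨φX,Y⟩φZ) + ⟨AY,Z⟩AX − ⟨AX,Z⟩AY for a real number c, and l(X) = R(X,x)x. If l(X) = 0 for all X ∈ V, then c = 0. (This is the case α = 0 in the proof of Proposition 3.2: there is no point of a hypersurface in M₂(c), c ≠ 0, with Aξ = βU, β ≠ 0, and vanishing structure Jacobi operator.) -/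
open scoped RealInnerProductSpace

/-!
Since `φ ξ = 0` and `‖ξ‖ = 1`, the Gauss equation gives
`R(X, ξ)ξ = (c/4) (X - ⟪X, ξ⟫ ξ) + ⟪A ξ, ξ⟫ A X - ⟪X, A ξ⟫ A ξ`.
Here `A ξ = β U ⊥ ξ`, and `W ⊥ ξ, U`, so both shape-operator terms vanish at `W`:
`l W = (c/4) W` with `W ≠ 0`, hence `c = 0`.
-/

section

variable {V : Type*} [NormedAddCommGroup V] [InnerProductSpace ℝ V]

theorem gaussCurvature_apply_self_self_of_inner_eq_zero {c : ℝ} {φ A : V →ₗ[ℝ] V} {ξ X : V}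
    (hA : A.IsSymmetric) (hφξ : φ ξ = 0) (hξ : ‖ξ‖ = 1) (hAξ : ⟪A ξ, ξ⟫ = 0)
    (hXξ : ⟪X, ξ⟫ = 0) (hXAξ : ⟪X, A ξ⟫ = 0) :
    gaussCurvature c φ A X ξ ξ = (c / 4) • X := by
  have hAXξ : ⟪A X, ξ⟫ = 0 := by rw [hA X ξ, hXAξ]
  simp [gaussCurvature, hφξ, hξ, hXξ, hAξ, hAXξ]

end

theorem vanishing_structure_jacobi_alpha_zero_general
    {V : Type*} [NormedAddCommGroup V] [InnerProductSpace ℝ V]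
    (u w x : V) (hon : Orthonormal ℝ ![u, w, x])
    (φ : V →ₗ[ℝ] V) (hφx : φ x = 0)
    (A : V →ₗ[ℝ] V) (hA : ∀ X Y : V, ⟪A X, Y⟫ = ⟪X, A Y⟫)
    (β c : ℝ)
    (hAx : A x = β • u)
    (R : V → V → V → V)
    (hR : ∀ X Y Z : V, R X Y Z =
      (c / 4) • (⟪Y, Z⟫ • X - ⟪X, Z⟫ • Y + ⟪φ Y, Z⟫ • φ X
        - ⟪φ X, Z⟫ • φ Y - (2 * ⟪φ X, Y⟫) • φ Z)
      + ⟪A Y, Z⟫ • A X - ⟪A X, Z⟫ • A Y)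
    (l : V → V) (hl : ∀ X : V, l X = R X x x)
    (hl0 : ∀ X : V, l X = 0) :
    c = 0 := by
  have hux : ⟪u, x⟫ = 0 := by simpa using hon.2 (show (0 : Fin 3) ≠ 2 by decide)
  have hwx : ⟪w, x⟫ = 0 := by simpa using hon.2 (show (1 : Fin 3) ≠ 2 by decide)
  have hwu : ⟪w, u⟫ = 0 := by simpa using hon.2 (show (1 : Fin 3) ≠ 0 by decide)
  have hlw : l w = (c / 4) • w := by
    rw [hl, hR]
    refine gaussCurvature_apply_self_self_of_inner_eq_zero hA hφx (by simpa using hon.1 2) ?_ hwx ?_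
    · rw [hAx, real_inner_smul_left, hux, mul_zero]
    · rw [hAx, real_inner_smul_right, hwu, mul_zero]
  have hw : w ≠ 0 := by simpa using hon.ne_zero 1
  have hc : c / 4 = 0 := (smul_eq_zero.mp (hlw ▸ hl0 w)).resolve_right hw
  linarith

/-- The case `α = 0` in the proof of Proposition 3.2: there is no point with `Aξ = βU`,
`β ≠ 0`, and vanishing structure Jacobi operator unless `c = 0`. -/
theorem vanishing_structure_jacobi_alpha_zero
    {V : Type*} [NormedAddCommGroup V] [InnerProductSpace ℝ V]
    (hdim : Module.finrank ℝ V = 3)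
    (u w x : V) (hon : Orthonormal ℝ ![u, w, x])
    (φ : V →ₗ[ℝ] V) (hφu : φ u = w) (hφw : φ w = -u) (hφx : φ x = 0)
    (A : V →ₗ[ℝ] V) (hA : ∀ X Y : V, ⟪A X, Y⟫ = ⟪X, A Y⟫)
    (β c : ℝ) (hβ : β ≠ 0)
    (hAx : A x = β • u)
    (R : V → V → V → V)
    (hR : ∀ X Y Z : V, R X Y Z =
      (c / 4) • (⟪Y, Z⟫ • X - ⟪X, Z⟫ • Y + ⟪φ Y, Z⟫ • φ X
        - ⟪φ X, Z⟫ • φ Y - (2 * ⟪φ X, Y⟫) • φ Z)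
      + ⟪A Y, Z⟫ • A X - ⟪A X, Z⟫ • A Y)
    (l : V → V) (hl : ∀ X : V, l X = R X x x)
    (hl0 : ∀ X : V, l X = 0) :
    c = 0 :=
  vanishing_structure_jacobi_alpha_zero_general u w x hon φ hφx A hA β c hAx R hR l hl hl0
end

section
/- Let α, β, c, κ₁, κ₃, Dα, Dβ be real numbers with α ≠ 0, β ≠ 0, satisfying: 16α² + 4β² = c; Dα = β(α + κ₃ + 3c/(4α)); Dβ = β² + βκ₁ + (c/(2α))(β²/α − c/(4α)); κ₃ = −4α; βκ₁ = (c/(4α))(c/(4α) − β²/α) − 4β²; and 32α·Dα + 8β·Dβ = 0. Then a contradiction follows (i.e. such real numbers do not exist, since the equations force 4α² + β² = 0). (This is the step eliminating the subset M₂ in the proof of Proposition 3.2, where Dα, Dβ are the derivatives of α, β along φU and the last equation comes from differentiating 16α² + 4β² = c along φU.) -/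
/-- The step eliminating the subset `M₂` in the proof of Proposition 3.2: with `Dα`, `Dβ` the
derivatives of `α`, `β` along `φU`, the listed relations are contradictory (they force
`4α² + β² = 0`). -/
theorem prop_3_2_M2_contradiction
    (α β c κ₁ κ₃ Dα Dβ : ℝ) (hα : α ≠ 0) (hβ : β ≠ 0)
    (h320 : 16 * α ^ 2 + 4 * β ^ 2 = c)
    (h312 : Dα = β * (α + κ₃ + 3 * c / (4 * α)))
    (h313 : Dβ = β ^ 2 + β * κ₁ + (c / (2 * α)) * (β ^ 2 / α - c / (4 * α)))
    (h317 : κ₃ = -4 * α)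
    (h318 : β * κ₁ = (c / (4 * α)) * (c / (4 * α) - β ^ 2 / α) - 4 * β ^ 2)
    (hdiff : 32 * α * Dα + 8 * β * Dβ = 0) :
    False := by
  subst h317 h312 h320
  have hk : β * κ₁ = 16 * α ^ 2 := by rw [h318]; field_simp; ring
  have hDβ : Dβ = -16 * α ^ 2 - 7 * β ^ 2 := by rw [h313, hk]; field_simp; ring
  have hDα : 32 * α * (β * ((α + -4 * α) + 3 * (16 * α ^ 2 + 4 * β ^ 2) / (4 * α)))
      = β * (288 * α ^ 2 + 96 * β ^ 2) := by field_simp; ring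
  rw [hDβ, hDα] at hdiff
  have : β * (160 * α ^ 2 + 40 * β ^ 2) = 0 := by linarith [hdiff]
  rcases mul_eq_zero.1 this with h | h
  · exact hβ h
  · nlinarith [sq_nonneg α, sq_nonneg β, (sq_nonneg α).lt_of_ne ((pow_ne_zero 2 hα).symm)]
end

section
/- Let α, β, c, κ₁, κ₃, Dα, Dβ be real numbers with α ≠ 0 and β ≠ 0, satisfying: Dα = 0; Dα = β(α + κ₃ + 3c/(4α)); Dβ = β² + βκ₁ + (c/(2α))(β²/α − c/(4α)); κ₃ = −4α; βκ₁ = (c/(4α))(c/(4α) − β²/α) − 4β²; κ₁(κ₃ + c/(4α)) + β(κ₃ − c/(2α)) = 0; and 6β·Dβ = 2α·Dα. Then a contradiction follows (the equations force c = 4α², βκ₁ = α² − 5β², κ₁ = −2β, hence 3β² = α², and then Dβ = −5β² together with 6β·Dβ = 0 forces β = 0). (This is the final step of the proof of Proposition 3.2, where Dα, Dβ are the derivatives of α, β along φU and the last equation comes from differentiating 3β² = α² along φU.) -/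
namespace StructureJacobi

variable {K : Type*} [Field K] [CharZero K] {α β c κ₁ κ₃ Dβ : K}

theorem c_eq_four_mul_sq (hα : α ≠ 0) (hκ₃ : κ₃ = -4 * α)
    (h : α + κ₃ + 3 * c / (4 * α) = 0) : c = 4 * α ^ 2 := by
  subst hκ₃
  field_simp at h
  linear_combination h / 3

theorem κ₁_eq_neg_two_mul (hα : α ≠ 0) (hc : c = 4 * α ^ 2) (hκ₃ : κ₃ = -4 * α)
    (h : κ₁ * (κ₃ + c / (4 * α)) + β * (κ₃ - c / (2 * α)) = 0) : κ₁ = -2 * β := by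
  subst hc hκ₃
  field_simp at h
  have : α * (κ₁ + 2 * β) = α * 0 := by linear_combination -h / 6
  linear_combination mul_left_cancel₀ hα this

theorem sq_eq_three_mul_sq (hα : α ≠ 0) (hc : c = 4 * α ^ 2) (hκ₁ : κ₁ = -2 * β)
    (h : β * κ₁ = (c / (4 * α)) * (c / (4 * α) - β ^ 2 / α) - 4 * β ^ 2) :
    α ^ 2 = 3 * β ^ 2 := by
  subst hc hκ₁
  field_simp at h
  linear_combination -h

theorem Dβ_eq_neg_five_mul_sq (hα : α ≠ 0) (hc : c = 4 * α ^ 2) (hκ₁ : κ₁ = -2 * β)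
    (hαβ : α ^ 2 = 3 * β ^ 2)
    (h : Dβ = β ^ 2 + β * κ₁ + (c / (2 * α)) * (β ^ 2 / α - c / (4 * α))) :
    Dβ = -5 * β ^ 2 := by
  subst hc hκ₁
  field_simp at h
  linear_combination h / 2 - 2 * hαβ

end StructureJacobi

/-- The final step of the proof of Proposition 3.2: with `Dα`, `Dβ` the derivatives of `α`, `β`
along `φU` and `(φU)α = 0`, the listed relations are contradictory (they force `c = 4α²`,
`βκ₁ = α² − 5β²`, `κ₁ = −2β`, hence `3β² = α²`, and then `β = 0`). -/
theorem prop_3_2_final_contradiction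
    (α β c κ₁ κ₃ Dα Dβ : ℝ) (hα : α ≠ 0) (hβ : β ≠ 0)
    (hDα0 : Dα = 0)
    (h312 : Dα = β * (α + κ₃ + 3 * c / (4 * α)))
    (h313 : Dβ = β ^ 2 + β * κ₁ + (c / (2 * α)) * (β ^ 2 / α - c / (4 * α)))
    (h317 : κ₃ = -4 * α)
    (h318 : β * κ₁ = (c / (4 * α)) * (c / (4 * α) - β ^ 2 / α) - 4 * β ^ 2)
    (h316 : κ₁ * (κ₃ + c / (4 * α)) + β * (κ₃ - c / (2 * α)) = 0)
    (hdiff : 6 * β * Dβ = 2 * α * Dα) :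
    False := by
  have hφUα : α + κ₃ + 3 * c / (4 * α) = 0 :=
    (mul_eq_zero.mp (hDα0 ▸ h312).symm).resolve_left hβ
  have hc := StructureJacobi.c_eq_four_mul_sq hα h317 hφUα
  have hκ₁ := StructureJacobi.κ₁_eq_neg_two_mul hα hc h317 h316
  have hαβ := StructureJacobi.sq_eq_three_mul_sq hα hc hκ₁ h318
  rw [StructureJacobi.Dβ_eq_neg_five_mul_sq hα hc hκ₁ hαβ h313, hDα0] at hdiff
  exact hβ (pow_eq_zero_iff three_ne_zero |>.mp (by linear_combination -hdiff / 30))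
end

section
/- With the Hopf pointwise model below, suppose the structure Jacobi operator l is pseudo-parallel with function value L ∈ ℝ. Then the following three identities hold: α(ν − λ)(c + λν − L) = 0; (c/4 + αλ)(L − αλ − c/4) = 0; and (c/4 + αν)(L − αν − c/4) = 0 (relations (5.3), (5.4), (5.5) of the paper). -/
open scoped RealInnerProductSpace

/-- Relations (5.3), (5.4), (5.5): at a point of a Hopf hypersurface (`Ax = αx`, `Au = λu`,
`Aw = νw`) with pseudo-parallel structure Jacobi operator with function value `L`, we have
`α(ν − λ)(c + λν − L) = 0`, `(c/4 + αλ)(L − αλ − c/4) = 0` and `(c/4 + αν)(L − αν − c/4) = 0`. -/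
theorem hopf_pseudo_parallel_relations
    {V : Type*} [NormedAddCommGroup V] [InnerProductSpace ℝ V]
    (hdim : Module.finrank ℝ V = 3)
    (u w x : V) (hon : Orthonormal ℝ ![u, w, x])
    (φ : V →ₗ[ℝ] V) (hφu : φ u = w) (hφw : φ w = -u) (hφx : φ x = 0)
    (A : V →ₗ[ℝ] V) (hA : ∀ X Y : V, ⟪A X, Y⟫ = ⟪X, A Y⟫)
    (α lam ν c L : ℝ)
    (hAx : A x = α • x) (hAu : A u = lam • u) (hAw : A w = ν • w)
    (R : V → V → V → V)
    (hR : ∀ X Y Z : V, R X Y Z =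
      (c / 4) • (⟪Y, Z⟫ • X - ⟪X, Z⟫ • Y + ⟪φ Y, Z⟫ • φ X
        - ⟪φ X, Z⟫ • φ Y - (2 * ⟪φ X, Y⟫) • φ Z)
      + ⟪A Y, Z⟫ • A X - ⟪A X, Z⟫ • A Y)
    (l : V → V) (hl : ∀ X : V, l X = R X x x)
    (hpp : ∀ X Y Z : V,
      R X Y (l Z) - l (R X Y Z)
        = L • ((⟪Y, l Z⟫ • X - ⟪l Z, X⟫ • Y)
            - l (⟪Y, Z⟫ • X - ⟪Z, X⟫ • Y))) :
    α * (ν - lam) * (c + lam * ν - L) = 0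
      ∧ (c / 4 + α * lam) * (L - α * lam - c / 4) = 0
      ∧ (c / 4 + α * ν) * (L - α * ν - c / 4) = 0 := by
  rw [orthonormal_iff_ite] at hon
  have huu : ⟪u,u⟫ = 1 := by simpa using hon 0 0
  have hww : ⟪w,w⟫ = 1 := by simpa using hon 1 1
  have hxx : ⟪x,x⟫ = 1 := by simpa using hon 2 2
  have huw : ⟪u,w⟫ = 0 := by simpa using hon 0 1
  have hwu : ⟪w,u⟫ = 0 := by simpa using hon 1 0
  have hux : ⟪u,x⟫ = 0 := by simpa using hon 0 2
  have hxu : ⟪x,u⟫ = 0 := by simpa using hon 2 0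
  have hwx : ⟪w,x⟫ = 0 := by simpa using hon 1 2
  have hxw : ⟪x,w⟫ = 0 := by simpa using hon 2 1
  refine ⟨?_, ?_, ?_⟩
  · have key := congrArg (fun v => ⟪w, v⟫) (hpp u w u)
    simp only [hl, hR] at key
    simp only [hφu, hφw, hφx, hAu, hAw, hAx, map_add, map_sub, map_smul, map_neg, map_zero,
      inner_add_left, inner_add_right, inner_sub_left, inner_sub_right,
      inner_smul_left, inner_smul_right, inner_neg_left, inner_neg_right,
      inner_zero_left, inner_zero_right, smul_zero, smul_neg, smul_smul,
      huu, hww, hxx, huw, hwu, hux, hxu, hwx, hxw, conj_trivial] at key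
    linear_combination key
  · have key := congrArg (fun v => ⟪x, v⟫) (hpp u x u)
    simp only [hl, hR] at key
    simp only [hφu, hφw, hφx, hAu, hAw, hAx, map_add, map_sub, map_smul, map_neg, map_zero,
      inner_add_left, inner_add_right, inner_sub_left, inner_sub_right,
      inner_smul_left, inner_smul_right, inner_neg_left, inner_neg_right,
      inner_zero_left, inner_zero_right, smul_zero, smul_neg, smul_smul,
      huu, hww, hxx, huw, hwu, hux, hxu, hwx, hxw, conj_trivial] at key
    linear_combination key
  · have key := congrArg (fun v => ⟪x, v⟫) (hpp w x w)
    simp only [hl, hR] at key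
    simp only [hφu, hφw, hφx, hAu, hAw, hAx, map_add, map_sub, map_smul, map_neg, map_zero,
      inner_add_left, inner_add_right, inner_sub_left, inner_sub_right,
      inner_smul_left, inner_smul_right, inner_neg_left, inner_neg_right,
      inner_zero_left, inner_zero_right, smul_zero, smul_neg, smul_smul,
      huu, hww, hxx, huw, hwu, hux, hxu, hwx, hxw, conj_trivial] at key
    linear_combination key
end

section
/- There is no real number r > 0 such that, setting α = 2·tanh(2r), λ₁ = cosh(r)/sinh(r) (= coth r) and λ₂ = tanh(r), either of the two assignments (λ, ν) = (λ₁, λ₂) or (λ, ν) = (λ₂, λ₁) satisfies all of the equations λ = 4α/7, ν = −4α and −4 = −16α²/7. -/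
/-- No tube of radius `r > 0` of type B in `ℂH²` (principal curvatures `α = 2 tanh (2r)`,
`coth r`, `tanh r`, with `c = −4`) satisfies relation (5.6): `λ = 4α/7`, `ν = −4α`,
`c = −16α²/7`, in either assignment of `coth r`, `tanh r` to `λ`, `ν`. -/
theorem no_type_B_satisfies_5_6 :
    ¬ ∃ r : ℝ, 0 < r ∧
      ((Real.cosh r / Real.sinh r = 4 * (2 * Real.tanh (2 * r)) / 7
          ∧ Real.tanh r = -(4 * (2 * Real.tanh (2 * r)))
          ∧ (-4 : ℝ) = -16 * (2 * Real.tanh (2 * r)) ^ 2 / 7)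
        ∨ (Real.tanh r = 4 * (2 * Real.tanh (2 * r)) / 7
          ∧ Real.cosh r / Real.sinh r = -(4 * (2 * Real.tanh (2 * r)))
          ∧ (-4 : ℝ) = -16 * (2 * Real.tanh (2 * r)) ^ 2 / 7)) := by
  rintro ⟨r, hr, h⟩
  have htanh : ∀ x : ℝ, 0 < x → 0 < Real.tanh x := fun x hx => by
    rw [Real.tanh_eq_sinh_div_cosh]
    exact div_pos (Real.sinh_pos_iff.mpr hx) (Real.cosh_pos x)
  have ht2 : 0 < Real.tanh (2 * r) := htanh _ (by linarith)
  rcases h with ⟨-, h2, -⟩ | ⟨-, h2, -⟩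
  · have := htanh r hr
    linarith
  · have hc : 0 < Real.cosh r / Real.sinh r :=
      div_pos (Real.cosh_pos r) (Real.sinh_pos_iff.mpr hr)
    linarith
end
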